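/- Let γ be a real number with |γ| > 1, a, s positive integers, 0 < m ≤ M real numbers, k ≥ 1, and ε_0, ..., ε_{k-1} complex numbers, not all zero, such that m ≤ |ε_j| ≤ M whenever ε_j ≠ 0. If ε_0 + ε_1 γ^{as} + ... + ε_{k-1} γ^{as(k-1)} = 0, then s ≤ log((M+m)/m) / (a log|γ|). -/

import Mathlib

/-!
The vanishing combination says that `γ ^ (a * s)` is a root of the nonzero polynomial
`∑ ε_j X ^ j`. Its leading coefficient has norm at least `m` and all others norm at most `M`, so
Cauchy's bound gives `|γ| ^ (a * s) < 1 + M / m`; taking logarithms yields the bound on `s`.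
-/

open Polynomial

namespace Polynomial

section ofFn

variable {R : Type*} [Semiring R] [DecidableEq R]

theorem eval_ofFn {n : ℕ} (v : Fin n → R) (x : R) :
    (ofFn n v).eval x = ∑ i : Fin n, v i * x ^ (i : ℕ) := by
  simp [ofFn_eq_sum_monomial, eval_finsetSum]

theorem ofFn_ne_zero {n : ℕ} {v : Fin n → R} (hv : v ≠ 0) : ofFn n v ≠ 0 :=
  (map_ne_zero_iff _ (injective_ofFn n)).mpr hv

theorem ofFn_coeff_mem_insert_range {n : ℕ} (v : Fin n → R) (i : ℕ) :
    (ofFn n v).coeff i ∈ insert 0 (Set.range v) := by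
  rcases lt_or_ge i n with hi | hi
  · exact Or.inr ⟨⟨i, hi⟩, (ofFn_coeff_eq_val_of_lt v hi).symm⟩
  · exact Or.inl (ofFn_coeff_eq_zero_of_ge v hi)

end ofFn

variable {K : Type*} [NormedDivisionRing K]

theorem cauchyBound_le_of_coeff_bounds {p : K[X]} (hp : p ≠ 0) {m M : ℝ} (hm : 0 < m)
    (hcoeff : ∀ i, p.coeff i ≠ 0 → m ≤ ‖p.coeff i‖ ∧ ‖p.coeff i‖ ≤ M) :
    (cauchyBound p : ℝ) ≤ M / m + 1 := by
  have hlead := hcoeff _ (leadingCoeff_ne_zero.mpr hp)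
  have hM : 0 ≤ M := hm.le.trans (hlead.1.trans hlead.2)
  have hnorm (i : ℕ) : ‖p.coeff i‖ ≤ M := by
    by_cases hi : p.coeff i = 0
    · simpa [hi] using hM
    · exact (hcoeff i hi).2
  have hsup : (Finset.range p.natDegree).sup (‖p.coeff ·‖₊) ≤ M.toNNReal :=
    Finset.sup_le fun i _ ↦ (Real.le_toNNReal_iff_coe_le hM).mpr (hnorm i)
  simp only [cauchyBound, NNReal.coe_add, NNReal.coe_div, coe_nnnorm, NNReal.coe_one]
  gcongr
  · exact (NNReal.coe_le_coe.mpr hsup).trans_eq (Real.coe_toNNReal M hM)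
  · exact hlead.1

theorem IsRoot.norm_lt_of_coeff_bounds {p : K[X]} (hp : p ≠ 0) {m M : ℝ} (hm : 0 < m)
    (hcoeff : ∀ i, p.coeff i ≠ 0 → m ≤ ‖p.coeff i‖ ∧ ‖p.coeff i‖ ≤ M) {z : K}
    (hz : p.IsRoot z) : ‖z‖ < (M + m) / m := by
  calc ‖z‖ < cauchyBound p := hz.norm_lt_cauchyBound hp
    _ ≤ M / m + 1 := cauchyBound_le_of_coeff_bounds hp hm hcoeff
    _ = (M + m) / m := by field_simp

end Polynomial

theorem bound_s_of_vanishing_combination_general (γ : ℝ) (hγ : 1 < |γ|) (a s : ℕ) (ha : 1 ≤ a)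
    (m M : ℝ) (hm : 0 < m) (k : ℕ)
    (ε : Fin k → ℂ) (hne : ∃ j, ε j ≠ 0)
    (hε : ∀ j, ε j ≠ 0 → m ≤ ‖ε j‖ ∧ ‖ε j‖ ≤ M)
    (h : ∑ j : Fin k, ε j * (γ : ℂ) ^ (a * s * (j : ℕ)) = 0) :
    (s : ℝ) ≤ Real.log ((M + m) / m) / (a * Real.log |γ|) := by
  classical
  have hp : ofFn k ε ≠ 0 := ofFn_ne_zero (Function.ne_iff.mpr hne)
  have hroot : (ofFn k ε).IsRoot ((γ : ℂ) ^ (a * s)) := by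
    simpa [IsRoot, eval_ofFn, ← pow_mul] using h
  have hcoeff (i : ℕ) (hi : (ofFn k ε).coeff i ≠ 0) :
      m ≤ ‖(ofFn k ε).coeff i‖ ∧ ‖(ofFn k ε).coeff i‖ ≤ M := by
    obtain ⟨j, hj⟩ := (ofFn_coeff_mem_insert_range ε i).resolve_left hi
    exact hj ▸ hε j (hj ▸ hi)
  have hγas : |γ| ^ (a * s) < (M + m) / m := by
    simpa using hroot.norm_lt_of_coeff_bounds hp hm hcoeff
  have hden : 0 < a * Real.log |γ| := mul_pos (by exact_mod_cast ha) (Real.log_pos hγ)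
  rw [le_div_iff₀ hden]
  calc (s : ℝ) * (a * Real.log |γ|) = Real.log (|γ| ^ (a * s)) := by
        rw [Real.log_pow]; push_cast; ring
    _ ≤ Real.log ((M + m) / m) := Real.log_le_log (by positivity) hγas.le

theorem bound_s_of_vanishing_combination (γ : ℝ) (hγ : 1 < |γ|) (a s : ℕ) (ha : 1 ≤ a)
    (hs : 1 ≤ s) (m M : ℝ) (hm : 0 < m) (hmM : m ≤ M) (k : ℕ) (hk : 1 ≤ k)
    (ε : Fin k → ℂ) (hne : ∃ j, ε j ≠ 0)
    (hε : ∀ j, ε j ≠ 0 → m ≤ ‖ε j‖ ∧ ‖ε j‖ ≤ M)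
    (h : ∑ j : Fin k, ε j * (γ : ℂ) ^ (a * s * (j : ℕ)) = 0) :
    (s : ℝ) ≤ Real.log ((M + m) / m) / (a * Real.log |γ|) :=
  bound_s_of_vanishing_combination_general γ hγ a s ha m M hm k ε hne hε h
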